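/- Let p be an odd prime, l ≥ 1 an integer, and q = p^{2l+1}. Then for every multiplicative character χ of (ℤ/qℤ)^* there exists a unique t ∈ ℤ/p^{l+1}ℤ such that χ(1 + p^l x + p^{2l}·(x²/2)) = e_{p^{l+1}}(t x) for all x ∈ ℤ/p^{l+1}ℤ, where x²/2 denotes x² times the inverse of 2 modulo p^{l+1}. -/

import Mathlib

/-!
In `ℤ/p^{2l+1}ℤ` the element `P = p^l` satisfies `P³ = 0`, so `x ↦ 1 + P x + P² x²/2` is the
truncated exponential `exp (P x)` and turns addition into multiplication; since `P · p^{l+1} = 0`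
it is well defined on `ℤ/p^{l+1}ℤ`. Composed with `χ` it is an additive character of
`ℤ/p^{l+1}ℤ`, and every such character is `x ↦ e_{p^{l+1}}(t x)` for exactly one `t`.
-/

open Complex

/-- The standard additive character `e_q(x) = exp(2πix/q)` of `ℤ/qℤ`. -/
noncomputable def eZMod (q : ℕ) (x : ZMod q) : ℂ :=
  Complex.exp (2 * Real.pi * Complex.I * x.val / q)

theorem eZMod_eq_stdAddChar {N : ℕ} [NeZero N] (x : ZMod N) : eZMod N x = ZMod.stdAddChar x := by
  rw [ZMod.stdAddChar_apply, ZMod.toCircle_apply, eZMod]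

theorem ZMod.bijective_mulShift_stdAddChar (N : ℕ) [NeZero N] :
    Function.Bijective fun t : ZMod N ↦ (stdAddChar : AddChar (ZMod N) ℂ).mulShift t := by
  rw [Fintype.bijective_iff_injective_and_card, AddChar.card_eq]
  refine ⟨fun t t' h ↦ injective_stdAddChar ?_, rfl⟩
  simpa using DFunLike.congr_fun h 1

theorem AddChar.existsUnique_eq_stdAddChar_mul {N : ℕ} [NeZero N] (ψ : AddChar (ZMod N) ℂ) :
    ∃! t : ZMod N, ∀ x, ψ x = ZMod.stdAddChar (t * x) := by
  obtain ⟨t, rfl⟩ := (ZMod.bijective_mulShift_stdAddChar N).surjective ψ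
  refine ⟨t, fun x ↦ rfl, fun t' ht' ↦ (ZMod.bijective_mulShift_stdAddChar N).injective ?_⟩
  ext x
  exact (ht' x).symm

theorem ZMod.mul_val_natCast_of_mul_eq_zero {R : Type*} [CommRing R] {n : ℕ} {c : R}
    (hc : c * n = 0) (m : ℕ) : c * ((m : ZMod n).val : R) = c * m := by
  conv_rhs => rw [← Nat.mod_add_div m n]
  rw [ZMod.val_natCast]
  push_cast
  linear_combination -((m / n : ℕ) : R) * hc

section TruncExp

variable {R : Type*} [CommRing R] {n : ℕ} [NeZero n] {P : R}

noncomputable def truncExpChar (hP3 : P ^ 3 = 0) (hPn : P * n = 0) (h2 : IsUnit (2 : ZMod n)) :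
    AddChar (ZMod n) R where
  toFun x := 1 + P * x.val + P ^ 2 * (x ^ 2 * 2⁻¹).val
  map_zero_eq_one' := by simp
  map_add_eq_mul' x y := by
    have hsum : x + y = ((x.val + y.val : ℕ) : ZMod n) := by
      push_cast [ZMod.natCast_zmod_val]; rfl
    have hsq : (x + y) ^ 2 * 2⁻¹ =
        (((x ^ 2 * 2⁻¹).val + (y ^ 2 * 2⁻¹).val + x.val * y.val : ℕ) : ZMod n) := by
      push_cast [ZMod.natCast_zmod_val]
      linear_combination (x * y) * ZMod.mul_inv_of_unit 2 h2
    have hP2n : P ^ 2 * n = 0 := by linear_combination P * hPn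
    rw [hsq, hsum, ZMod.mul_val_natCast_of_mul_eq_zero hPn,
      ZMod.mul_val_natCast_of_mul_eq_zero hP2n]
    push_cast
    linear_combination (-(x.val * (y ^ 2 * 2⁻¹).val + (x ^ 2 * 2⁻¹).val * y.val
      + P * (x ^ 2 * 2⁻¹).val * (y ^ 2 * 2⁻¹).val) : R) * hP3

end TruncExp

/-- For `q = p^{2l+1}` an odd power of an odd prime, every multiplicative character
`χ` of `(ℤ/qℤ)^*` has a unique parameter `t ∈ ℤ/p^{l+1}ℤ` such that
`χ(1 + p^l x + p^{2l}·(x²/2)) = e_{p^{l+1}}(t x)` for all `x ∈ ℤ/p^{l+1}ℤ`, where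
`x²/2` denotes `x²` times the inverse of `2` modulo `p^{l+1}`. -/
theorem exists_unique_param_odd_power
    (p : ℕ) (hp : p.Prime) (hodd : p ≠ 2) (l : ℕ) (hl : 1 ≤ l)
    (χ : MulChar (ZMod (p ^ (2 * l + 1))) ℂ) :
    ∃! t : ZMod (p ^ (l + 1)), ∀ x : ZMod (p ^ (l + 1)),
      χ (1 + (p : ZMod (p ^ (2 * l + 1))) ^ l * (x.val : ZMod (p ^ (2 * l + 1))) +
          (p : ZMod (p ^ (2 * l + 1))) ^ (2 * l) *
            (((x ^ 2 * (2 : ZMod (p ^ (l + 1)))⁻¹).val : ZMod (p ^ (2 * l + 1))))) =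
        eZMod (p ^ (l + 1)) (t * x) := by
  have : NeZero p := ⟨hp.ne_zero⟩
  have hP3 : ((p : ZMod (p ^ (2 * l + 1))) ^ l) ^ 3 = 0 := by
    rw [← pow_mul]
    exact ZMod.natCast_pow_eq_zero_of_le p (by omega)
  have hPn :
      (p : ZMod (p ^ (2 * l + 1))) ^ l * ((p ^ (l + 1) : ℕ) : ZMod (p ^ (2 * l + 1))) = 0 := by
    rw [Nat.cast_pow, ← pow_add]
    exact ZMod.natCast_pow_eq_zero_of_le p (by omega)
  have h2 : IsUnit (2 : ZMod (p ^ (l + 1))) := by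
    have h2p : ¬2 ∣ p ^ (l + 1) := fun h ↦
      hodd ((Nat.prime_dvd_prime_iff_eq Nat.prime_two hp).mp (Nat.prime_two.dvd_of_dvd_pow h)).symm
    exact_mod_cast (ZMod.isUnit_prime_iff_not_dvd Nat.prime_two).mpr h2p
  simp_rw [pow_mul', eZMod_eq_stdAddChar]
  exact (χ.toMonoidHom.compAddChar (truncExpChar hP3 hPn h2)).existsUnique_eq_stdAddChar_mul
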